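/- arXiv:1709.04701 — 2 statements merged into one kernel-verified Lean document; each statement's English description precedes it below -/
import Mathlib

section
/- (Theorem 8, optimality part) Let n ≥ 5 be prime. Then the code C_{G_4} is an F_2-linear subspace of the space of all labelings L : [n]×[n] → F_2 of dimension exactly (n−2)²; equivalently, its redundancy is n² − (n−2)² = 4n − 4, meeting the lower bound 2nρ − ρ² for ρ = 2 with equality. -/
open Finset

/-- The code `C_{G_4}`: labelings `L : [n]×[n] → F_2` of the complete directed graph with
self-loops such that (a) for `h ∈ [n-2]` the sum of `L` over the neighborhood-edge set
`S↓_h = {down edge of {h,ℓ} : ℓ ∈ [n-1]}` is `0`; (b) for `m ∈ [n]` the sum over the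
diagonal-edge set `D↓_m = {down edge of {k,ℓ} : k,ℓ ∈ [n]\{n-2}, ⟨k+ℓ⟩_n = m} ∪ {(n-1,n-2)}`
is `0`; (c) for `h ∈ [n-2]` the sum over `S↑_h = {up edge of {h,ℓ} : ℓ ∈ [n]\{n-2}}` is `0`;
and (d) for `m ∈ [n]` the sum over
`D↑_m = {up edge of {k,ℓ} : k,ℓ ∈ [n-1], ⟨k+ℓ⟩_n = m} ∪ {(n-2,n-1)}` is `0`.
Each edge in a set is counted once; downward edges are the ordered pairs `(k,ℓ)` with
`ℓ ≤ k` and upward edges those with `k ≤ ℓ`. -/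
def CG4 (n : ℕ) (hn : 5 ≤ n) : Set (Fin n → Fin n → ZMod 2) :=
  {L |
    (∀ h : Fin n, (h : ℕ) < n - 2 →
      ∑ ℓ ∈ univ.filter (fun ℓ : Fin n => (ℓ : ℕ) < n - 1),
        L (max h ℓ) (min h ℓ) = 0) ∧
    (∀ m : ℕ, m < n →
      (∑ p ∈ univ.filter (fun p : Fin n × Fin n =>
          (p.2 : ℕ) ≤ (p.1 : ℕ) ∧ (p.1 : ℕ) ≠ n - 2 ∧ (p.2 : ℕ) ≠ n - 2 ∧
            ((p.1 : ℕ) + (p.2 : ℕ)) % n = m),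
          L p.1 p.2) + L ⟨n - 1, by omega⟩ ⟨n - 2, by omega⟩ = 0) ∧
    (∀ h : Fin n, (h : ℕ) < n - 2 →
      ∑ ℓ ∈ univ.filter (fun ℓ : Fin n => (ℓ : ℕ) ≠ n - 2),
        L (min h ℓ) (max h ℓ) = 0) ∧
    (∀ m : ℕ, m < n →
      (∑ p ∈ univ.filter (fun p : Fin n × Fin n =>
          (p.1 : ℕ) ≤ (p.2 : ℕ) ∧ (p.1 : ℕ) < n - 1 ∧ (p.2 : ℕ) < n - 1 ∧
            ((p.1 : ℕ) + (p.2 : ℕ)) % n = m),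
          L p.1 p.2) + L ⟨n - 2, by omega⟩ ⟨n - 1, by omega⟩ = 0)}

lemma modCases {x n : ℕ} (h : x < 2 * n) :
    (x < n ∧ x % n = x) ∨ (n ≤ x ∧ x % n + n = x) := by
  rcases Nat.lt_or_ge x n with h' | h'
  · exact Or.inl ⟨h', Nat.mod_eq_of_lt h'⟩
  · refine Or.inr ⟨h', ?_⟩
    rw [Nat.mod_eq_sub_mod h', Nat.mod_eq_of_lt (by omega)]
    omega

lemma CG4_info_zero (n : ℕ) (hn : 5 ≤ n) (L : Fin n → Fin n → ZMod 2)
    (hL : L ∈ CG4 n hn)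
    (h0 : ∀ k ℓ : Fin n, (k : ℕ) < n - 2 → (ℓ : ℕ) < n - 2 → L k ℓ = 0) :
    L = 0 := by
  obtain ⟨ha, hb, hc, hd⟩ := hL
  set a : Fin n := ⟨n - 2, by omega⟩ with ha_def
  set b : Fin n := ⟨n - 1, by omega⟩ with hb_def
  have hav : (a : ℕ) = n - 2 := rfl
  have hbv : (b : ℕ) = n - 1 := rfl
  clear ha_def hb_def
  -- Step 1: L a h = 0 for h < n-2
  have hAa : ∀ h : Fin n, (h : ℕ) < n - 2 → L a h = 0 := by
    intro h hh
    have H := ha h hh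
    rwa [Finset.sum_eq_single_of_mem a
      (by simp only [Finset.mem_filter, Finset.mem_univ, true_and]; omega)
      (by
        intro ℓ hℓ hne
        simp only [Finset.mem_filter, Finset.mem_univ, true_and] at hℓ
        have hℓ2 : (ℓ : ℕ) ≠ n - 2 := fun hq => hne (Fin.ext (by omega))
        have e1 : ((h ⊔ ℓ : Fin n) : ℕ) = max (h : ℕ) (ℓ : ℕ) := rfl
        have e2 : ((h ⊓ ℓ : Fin n) : ℕ) = min (h : ℕ) (ℓ : ℕ) := rfl
        exact h0 _ _ (by omega) (by omega)),
      sup_eq_right.mpr (by rw [Fin.le_def]; omega),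
      inf_eq_left.mpr (by rw [Fin.le_def]; omega)] at H
  -- Step 2: L h b = 0 for h < n-2
  have hUb : ∀ h : Fin n, (h : ℕ) < n - 2 → L h b = 0 := by
    intro h hh
    have H := hc h hh
    rwa [Finset.sum_eq_single_of_mem b
      (by simp only [Finset.mem_filter, Finset.mem_univ, true_and]; omega)
      (by
        intro ℓ hℓ hne
        simp only [Finset.mem_filter, Finset.mem_univ, true_and] at hℓ
        have hℓ2 : (ℓ : ℕ) ≠ n - 1 := fun hq => hne (Fin.ext (by omega))
        have := ℓ.isLt
        have e1 : ((h ⊔ ℓ : Fin n) : ℕ) = max (h : ℕ) (ℓ : ℕ) := rfl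
        have e2 : ((h ⊓ ℓ : Fin n) : ℕ) = min (h : ℕ) (ℓ : ℕ) := rfl
        exact h0 _ _ (by omega) (by omega)),
      inf_eq_left.mpr (by rw [Fin.le_def]; omega),
      sup_eq_right.mpr (by rw [Fin.le_def]; omega)] at H
  -- Step 3: L a b = 0
  have hab : L a b = 0 := by
    have H := hd (n - 3) (by omega)
    rw [Finset.sum_eq_zero, zero_add] at H
    · exact H
    · intro p hp
      simp only [Finset.mem_filter, Finset.mem_univ, true_and] at hp
      obtain ⟨h1, h2, h3, h4⟩ := hp
      by_cases hcase : (p.2 : ℕ) < n - 2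
      · exact h0 _ _ (by omega) hcase
      · exfalso
        rcases modCases (x := (p.1 : ℕ) + (p.2 : ℕ)) (n := n)
          (by have := p.1.isLt; have := p.2.isLt; omega) with ⟨h5, h6⟩ | ⟨h5, h6⟩ <;> omega
  -- Step 4: L k a = 0 for k ≤ n-2
  have hUa : ∀ k : Fin n, (k : ℕ) ≤ n - 2 → L k a = 0 := by
    intro k hk
    have H := hd (((k : ℕ) + (n - 2)) % n) (Nat.mod_lt _ (by omega))
    rw [Finset.sum_eq_single_of_mem (k, a)
      (by
        simp only [Finset.mem_filter, Finset.mem_univ, true_and]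
        exact ⟨by omega, by omega, by omega, by trivial⟩)
      (by
        intro p hp hne
        simp only [Finset.mem_filter, Finset.mem_univ, true_and] at hp
        obtain ⟨h1, h2, h3, h4⟩ := hp
        by_cases hcase : (p.2 : ℕ) < n - 2
        · exact h0 _ _ (by omega) hcase
        · exfalso
          have hp2 : (p.2 : ℕ) = n - 2 := by omega
          apply hne
          have e1 : (p.1 : ℕ) = (k : ℕ) := by
            rcases modCases (x := (p.1 : ℕ) + (p.2 : ℕ)) (n := n)
              (by have := p.1.isLt; have := p.2.isLt; omega) with ⟨h5, h6⟩ | ⟨h5, h6⟩ <;>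
            rcases modCases (x := (k : ℕ) + (n - 2)) (n := n)
              (by have := k.isLt; omega) with ⟨h7, h8⟩ | ⟨h7, h8⟩ <;> omega
          have e2 : p.2 = a := Fin.ext (by omega)
          exact Prod.ext (Fin.ext e1) e2),
      hab, add_zero] at H
    exact H
  -- Step 5: L b a = 0
  have hba : L b a = 0 := by
    have H := hb (n - 3) (by omega)
    rw [Finset.sum_eq_zero, zero_add] at H
    · exact H
    · intro p hp
      simp only [Finset.mem_filter, Finset.mem_univ, true_and] at hp
      obtain ⟨h1, h2, h3, h4⟩ := hp
      by_cases hcase : (p.1 : ℕ) < n - 2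
      · exact h0 _ _ hcase (by omega)
      · exfalso
        have hp1 : (p.1 : ℕ) = n - 1 := by have := p.1.isLt; omega
        rcases modCases (x := (p.1 : ℕ) + (p.2 : ℕ)) (n := n)
          (by have := p.1.isLt; have := p.2.isLt; omega) with ⟨h5, h6⟩ | ⟨h5, h6⟩ <;> omega
  -- Step 6: L b ℓ = 0 for ℓ ≠ n-2
  have hbl : ∀ ℓ : Fin n, (ℓ : ℕ) ≠ n - 2 → L b ℓ = 0 := by
    intro ℓ hℓ
    have H := hb ((n - 1 + (ℓ : ℕ)) % n) (Nat.mod_lt _ (by omega))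
    rw [Finset.sum_eq_single_of_mem (b, ℓ)
      (by
        simp only [Finset.mem_filter, Finset.mem_univ, true_and]
        have := ℓ.isLt
        exact ⟨by omega, by omega, hℓ, by trivial⟩)
      (by
        intro p hp hne
        simp only [Finset.mem_filter, Finset.mem_univ, true_and] at hp
        obtain ⟨h1, h2, h3, h4⟩ := hp
        by_cases hcase : (p.1 : ℕ) < n - 2
        · exact h0 _ _ hcase (by omega)
        · exfalso
          have hp1 : (p.1 : ℕ) = n - 1 := by have := p.1.isLt; omega
          apply hne
          have e2 : (p.2 : ℕ) = (ℓ : ℕ) := by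
            rcases modCases (x := (p.1 : ℕ) + (p.2 : ℕ)) (n := n)
              (by have := p.1.isLt; have := p.2.isLt; omega) with ⟨h5, h6⟩ | ⟨h5, h6⟩ <;>
            rcases modCases (x := n - 1 + (ℓ : ℕ)) (n := n)
              (by have := ℓ.isLt; omega) with ⟨h7, h8⟩ | ⟨h7, h8⟩ <;>
            (have := ℓ.isLt; have := p.2.isLt; omega)
          have e1 : p.1 = b := Fin.ext (by omega)
          exact Prod.ext e1 (Fin.ext e2)),
      hba, add_zero] at H
    exact H
  -- conclude
  funext k ℓ
  have hk := k.isLt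
  have hl := ℓ.isLt
  show L k ℓ = 0
  rcases lt_trichotomy ((k : ℕ)) (n - 2) with hk2 | hk2 | hk2
  · rcases lt_trichotomy ((ℓ : ℕ)) (n - 2) with hl2 | hl2 | hl2
    · exact h0 _ _ hk2 hl2
    · have : ℓ = a := Fin.ext (by omega)
      rw [this]; exact hUa k (by omega)
    · have : ℓ = b := Fin.ext (by omega)
      rw [this]; exact hUb k hk2
  · have : k = a := Fin.ext (by omega)
    subst this
    rcases lt_trichotomy ((ℓ : ℕ)) (n - 2) with hl2 | hl2 | hl2
    · exact hAa _ hl2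
    · have : ℓ = a := Fin.ext (by omega)
      rw [this]; exact hUa a (by omega)
    · have : ℓ = b := Fin.ext (by omega)
      rw [this]; exact hab
  · have : k = b := Fin.ext (by omega)
    subst this
    by_cases hl2 : (ℓ : ℕ) = n - 2
    · have : ℓ = a := Fin.ext (by omega)
      rw [this]; exact hba
    · exact hbl ℓ hl2

/-- rows of the parity-check matrix -/
noncomputable def PhiMap (n : ℕ) (hn : 5 ≤ n) :
    (Fin n → Fin n → ZMod 2) →ₗ[ZMod 2]
      ((Fin (n - 2) ⊕ Fin n) ⊕ (Fin (n - 2) ⊕ Fin n) → ZMod 2) where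
  toFun L :=
    Sum.elim
      (Sum.elim
        (fun h => ∑ ℓ ∈ univ.filter (fun ℓ : Fin n => (ℓ : ℕ) < n - 1),
          L (max ⟨(h : ℕ), by have := h.isLt; omega⟩ ℓ) (min ⟨(h : ℕ), by have := h.isLt; omega⟩ ℓ))
        (fun m => (∑ p ∈ univ.filter (fun p : Fin n × Fin n =>
            (p.2 : ℕ) ≤ (p.1 : ℕ) ∧ (p.1 : ℕ) ≠ n - 2 ∧ (p.2 : ℕ) ≠ n - 2 ∧
              ((p.1 : ℕ) + (p.2 : ℕ)) % n = (m : ℕ)),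
            L p.1 p.2) + L ⟨n - 1, by omega⟩ ⟨n - 2, by omega⟩))
      (Sum.elim
        (fun h => ∑ ℓ ∈ univ.filter (fun ℓ : Fin n => (ℓ : ℕ) ≠ n - 2),
          L (min ⟨(h : ℕ), by have := h.isLt; omega⟩ ℓ) (max ⟨(h : ℕ), by have := h.isLt; omega⟩ ℓ))
        (fun m => (∑ p ∈ univ.filter (fun p : Fin n × Fin n =>
            (p.1 : ℕ) ≤ (p.2 : ℕ) ∧ (p.1 : ℕ) < n - 1 ∧ (p.2 : ℕ) < n - 1 ∧
              ((p.1 : ℕ) + (p.2 : ℕ)) % n = (m : ℕ)),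
            L p.1 p.2) + L ⟨n - 2, by omega⟩ ⟨n - 1, by omega⟩))
  map_add' L M := by
    funext i
    rcases i with (h | m) | (h | m) <;>
      simp only [Sum.elim_inl, Sum.elim_inr, Pi.add_apply, Finset.sum_add_distrib] <;> abel
  map_smul' c L := by
    funext i
    rcases i with (h | m) | (h | m) <;>
      simp only [Sum.elim_inl, Sum.elim_inr, Pi.smul_apply, smul_eq_mul, Finset.mul_sum,
        mul_add, RingHom.id_apply]

/-- `CG4` is exactly the kernel of `PhiMap`. -/
lemma PhiMap_ker_iff (n : ℕ) (hn : 5 ≤ n) (L : Fin n → Fin n → ZMod 2) :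
    L ∈ LinearMap.ker (PhiMap n hn) ↔ L ∈ CG4 n hn := by
  rw [LinearMap.mem_ker]
  constructor
  · intro H
    have H' : ∀ i, PhiMap n hn L i = 0 := fun i => by rw [H]; rfl
    refine ⟨?_, ?_, ?_, ?_⟩
    · intro h hh
      exact H' (Sum.inl (Sum.inl ⟨(h : ℕ), hh⟩))
    · intro m hm
      exact H' (Sum.inl (Sum.inr ⟨m, hm⟩))
    · intro h hh
      exact H' (Sum.inr (Sum.inl ⟨(h : ℕ), hh⟩))
    · intro m hm
      exact H' (Sum.inr (Sum.inr ⟨m, hm⟩))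
  · rintro ⟨h1, h2, h3, h4⟩
    funext i
    rcases i with (h | m) | (h | m)
    · exact h1 ⟨(h : ℕ), by have := h.isLt; omega⟩ h.isLt
    · exact h2 (m : ℕ) m.isLt
    · exact h3 ⟨(h : ℕ), by have := h.isLt; omega⟩ h.isLt
    · exact h4 (m : ℕ) m.isLt

/-- restriction of a codeword to the information coordinates `[n-2] × [n-2]` -/
noncomputable def restrictInfo (n : ℕ) (hn : 5 ≤ n) :
    (LinearMap.ker (PhiMap n hn)) →ₗ[ZMod 2] (Fin (n - 2) → Fin (n - 2) → ZMod 2) where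
  toFun x := fun i j => x.1 ⟨(i : ℕ), by have := i.isLt; omega⟩ ⟨(j : ℕ), by have := j.isLt; omega⟩
  map_add' x y := rfl
  map_smul' c x := rfl

/-- Theorem 8 (optimality part): for prime `n ≥ 5` the code `C_{G_4}` is an `F_2`-linear
subspace of the space of labelings `L : [n]×[n] → F_2` of dimension exactly `(n-2)²`;
equivalently its redundancy is `n² - (n-2)² = 4n - 4`, meeting the bound `2nρ - ρ²`
for `ρ = 2` with equality. -/
theorem CG4_optimal (n : ℕ) (hn : 5 ≤ n) (hp : Nat.Prime n) :
    ∃ V : Submodule (ZMod 2) (Fin n → Fin n → ZMod 2),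
      (V : Set (Fin n → Fin n → ZMod 2)) = CG4 n hn ∧
      Module.finrank (ZMod 2) V = (n - 2) ^ 2 := by
  classical
  refine ⟨LinearMap.ker (PhiMap n hn), ?_, ?_⟩
  · ext L
    rw [SetLike.mem_coe]
    exact PhiMap_ker_iff n hn L
  · have hdom : Module.finrank (ZMod 2) (Fin n → Fin n → ZMod 2) = n * n := by
      simp [Module.finrank_pi_fintype, Module.finrank_pi]
    have hcod : Module.finrank (ZMod 2)
        ((Fin (n - 2) ⊕ Fin n) ⊕ (Fin (n - 2) ⊕ Fin n) → ZMod 2)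
        = (n - 2 + n) + (n - 2 + n) := by
      simp [Module.finrank_pi]
    -- upper bound via injectivity of restriction to information coordinates
    have hinj : Function.Injective (restrictInfo n hn) := by
      rw [injective_iff_map_eq_zero]
      intro x hx
      apply Subtype.ext
      refine CG4_info_zero n hn x.1 ((PhiMap_ker_iff n hn x.1).mp x.2) ?_
      intro k ℓ hk hl
      have := congrFun (congrFun hx ⟨(k : ℕ), by omega⟩) ⟨(ℓ : ℕ), by omega⟩
      simpa [restrictInfo] using this
    have hub : Module.finrank (ZMod 2) (LinearMap.ker (PhiMap n hn)) ≤ (n - 2) * (n - 2) := by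
      have := LinearMap.finrank_le_finrank_of_injective hinj
      rwa [show Module.finrank (ZMod 2) (Fin (n - 2) → Fin (n - 2) → ZMod 2)
          = (n - 2) * (n - 2) by
        simp [Module.finrank_pi_fintype, Module.finrank_pi]] at this
    -- lower bound via rank-nullity
    have hrn := LinearMap.finrank_range_add_finrank_ker (PhiMap n hn)
    rw [hdom] at hrn
    have hrange : Module.finrank (ZMod 2) (LinearMap.range (PhiMap n hn))
        ≤ (n - 2 + n) + (n - 2 + n) := by
      rw [← hcod]; exact Submodule.finrank_le _
    have hq : (n - 2) * (n - 2) + ((n - 2 + n) + (n - 2 + n)) = n * n := by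
      obtain ⟨k, rfl⟩ : ∃ k, n = k + 5 := ⟨n - 5, by omega⟩
      have e : k + 5 - 2 = k + 3 := by omega
      rw [e]; ring
    rw [pow_two]
    omega
end

section
/- (Systematic property of C_{G_4}) Let n ≥ 5 be prime. Then the restriction map sending a labeling L ∈ C_{G_4} to its values on the information edges {(k,ℓ) : k,ℓ ∈ [n−2]} is a bijection from C_{G_4} onto F_2^{(n−2)²}; that is, every assignment of F_2-values to the edges among the first n−2 nodes extends to exactly one labeling in C_{G_4}. -/
open Finset

/-!
A labeling in `C_{G_4}` that vanishes on the information edges vanishes everywhere. Checks (a) and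
(c) each contain a single non-information edge, `(n-2, h)` resp. `(h, n-1)`. At `m = n-3` the
diagonal checks (b) and (d) contain only information edges besides the extra edges
`(n-1, n-2)` resp. `(n-2, n-1)`; for every other `m` the diagonal meets row `n-1`, resp. column
`n-2`, in exactly one edge, because `k ↦ k + c` is injective modulo `n`. Hence restriction to the
information edges is injective on the code. There are `2(n-2) + 2n = n² - (n-2)²` checks, so
the code has dimension at least `(n-2)²`, and an injective linear map into `F_2^{(n-2)²}` from
such a space is onto.
-/

open Module

namespace LinearMap

theorem bijOn_zeroLocus_of_finrank_le {K V W ι : Type*} [Field K]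
    [AddCommGroup V] [Module K V] [FiniteDimensional K V]
    [AddCommGroup W] [Module K W] [FiniteDimensional K W] [Fintype ι]
    (c : ι → Dual K V) (f : V →ₗ[K] W)
    (hker : ∀ v, (∀ i, c i v = 0) → f v = 0 → v = 0)
    (hdim : finrank K W + Fintype.card ι ≤ finrank K V) :
    Set.BijOn f {v | ∀ i, c i v = 0} Set.univ := by
  have hZ : ∀ v, v ∈ ker (pi c) ↔ ∀ i, c i v = 0 := by
    simp [funext_iff]
  have hinj : Function.Injective (f.domRestrict (ker (pi c))) := by
    rw [← ker_eq_bot, ker_eq_bot']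
    exact fun v hv => Subtype.ext (hker v ((hZ v).1 v.2) hv)
  have hrank : finrank K (ker (pi c)) = finrank K W := by
    refine le_antisymm (finrank_le_finrank_of_injective hinj) ?_
    have hsum : finrank K (range (pi c)) + finrank K (ker (pi c)) = finrank K V :=
      finrank_range_add_finrank_ker _
    have hrange : finrank K (range (pi c)) ≤ Fintype.card ι :=
      finrank_fintype_fun_eq_card (η := ι) K ▸ Submodule.finrank_le _
    omega
  have hsurj := (injective_iff_surjective_of_finrank_eq_finrank hrank).1 hinj
  rw [show {v | ∀ i, c i v = 0} = ker (pi c) from Set.ext fun v => (hZ v).symm]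
  exact ⟨Set.mapsTo_univ _ _, Set.injOn_iff_injective.2 hinj, Set.surjOn_iff_surjective.2 hsurj⟩

end LinearMap

theorem finrank_fun_fun (K α : Type*) [Field K] [Fintype α] :
    finrank K (α → α → K) = Fintype.card α * Fintype.card α := by
  rw [finrank_pi_fintype]
  simp

def edgeEval {R α : Type*} [CommSemiring R] (k ℓ : α) : Dual R (α → α → R) :=
  LinearMap.proj ℓ ∘ₗ LinearMap.proj k

@[simp]
theorem edgeEval_apply {R α : Type*} [CommSemiring R] (k ℓ : α) (L : α → α → R) :
    edgeEval k ℓ L = L k ℓ := rfl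

def edgeRestrict (R : Type*) {M α β : Type*} [Semiring R] [AddCommMonoid M] [Module R M]
    (e : β → α) : (α → α → M) →ₗ[R] (β → β → M) where
  toFun L k ℓ := L (e k) (e ℓ)
  map_add' _ _ := rfl
  map_smul' _ _ := rfl

theorem Nat.sub_one_add_sub_two_mod {n : ℕ} (hn : 3 ≤ n) : (n - 1 + (n - 2)) % n = n - 3 := by
  rw [show n - 1 + (n - 2) = n - 3 + n by omega, Nat.add_mod_right, Nat.mod_eq_of_lt (by omega)]

namespace CG4

abbrev CheckIndex (n : ℕ) : Type :=
  ({h : Fin n // (h : ℕ) < n - 2} ⊕ Fin n) ⊕ ({h : Fin n // (h : ℕ) < n - 2} ⊕ Fin n)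

def checks (n : ℕ) (hn : 5 ≤ n) : CheckIndex n → Dual (ZMod 2) (Fin n → Fin n → ZMod 2)
  | .inl (.inl h) =>
      ∑ ℓ ∈ univ.filter (fun ℓ : Fin n => (ℓ : ℕ) < n - 1), edgeEval (max h.1 ℓ) (min h.1 ℓ)
  | .inl (.inr m) =>
      (∑ p ∈ univ.filter (fun p : Fin n × Fin n =>
          (p.2 : ℕ) ≤ (p.1 : ℕ) ∧ (p.1 : ℕ) ≠ n - 2 ∧ (p.2 : ℕ) ≠ n - 2 ∧
            ((p.1 : ℕ) + (p.2 : ℕ)) % n = m),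
          edgeEval p.1 p.2) + edgeEval ⟨n - 1, by omega⟩ ⟨n - 2, by omega⟩
  | .inr (.inl h) =>
      ∑ ℓ ∈ univ.filter (fun ℓ : Fin n => (ℓ : ℕ) ≠ n - 2), edgeEval (min h.1 ℓ) (max h.1 ℓ)
  | .inr (.inr m) =>
      (∑ p ∈ univ.filter (fun p : Fin n × Fin n =>
          (p.1 : ℕ) ≤ (p.2 : ℕ) ∧ (p.1 : ℕ) < n - 1 ∧ (p.2 : ℕ) < n - 1 ∧
            ((p.1 : ℕ) + (p.2 : ℕ)) % n = m),
          edgeEval p.1 p.2) + edgeEval ⟨n - 2, by omega⟩ ⟨n - 1, by omega⟩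

theorem eq_setOf_checks (n : ℕ) (hn : 5 ≤ n) :
    CG4 n hn = {L | ∀ i, checks n hn i L = 0} := by
  ext L
  simp [CG4, checks, Sum.forall, Fin.forall_iff, LinearMap.sum_apply, and_assoc]

theorem card_checkIndex (n : ℕ) : Fintype.card (CheckIndex n) = 2 * (n - 2) + 2 * n := by
  simp only [Fintype.card_sum, Fintype.card_fin_lt_of_le (Nat.sub_le n 2), Fintype.card_fin]
  ring

theorem finrank_info_add_card_checkIndex {n : ℕ} (hn : 2 ≤ n) :
    finrank (ZMod 2) (Fin (n - 2) → Fin (n - 2) → ZMod 2) + Fintype.card (CheckIndex n) =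
      finrank (ZMod 2) (Fin n → Fin n → ZMod 2) := by
  rw [finrank_fun_fun, finrank_fun_fun, card_checkIndex, Fintype.card_fin, Fintype.card_fin]
  obtain ⟨m, rfl⟩ : ∃ m, n = m + 2 := ⟨n - 2, by omega⟩
  rw [Nat.add_sub_cancel]
  ring

def IsZeroOnInfoEdges {n : ℕ} (D : Fin n → Fin n → ZMod 2) : Prop :=
  ∀ k ℓ : Fin n, (k : ℕ) < n - 2 → (ℓ : ℕ) < n - 2 → D k ℓ = 0

variable {n : ℕ} {hn : 5 ≤ n} {D : Fin n → Fin n → ZMod 2}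

theorem apply_sub_two_left (hD : D ∈ CG4 n hn) (h0 : IsZeroOnInfoEdges D) (h : Fin n)
    (hh : (h : ℕ) < n - 2) : D ⟨n - 2, by omega⟩ h = 0 := by
  have hsum := hD.1 h hh
  rw [sum_eq_single_of_mem ⟨n - 2, by omega⟩ (by simp only [mem_filter, mem_univ, true_and]; omega)
    fun ℓ hℓ hne => ?_] at hsum
  · rwa [max_eq_right (Fin.le_iff_val_le_val.2 (by dsimp only; omega)),
      min_eq_left (Fin.le_iff_val_le_val.2 (by dsimp only; omega))] at hsum
  · simp only [mem_filter, mem_univ, true_and, ne_eq, Fin.ext_iff] at hℓ hne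
    exact h0 _ _ (by rw [Fin.coe_max]; omega) (by rw [Fin.coe_min]; omega)

theorem apply_sub_one_right (hD : D ∈ CG4 n hn) (h0 : IsZeroOnInfoEdges D) (h : Fin n)
    (hh : (h : ℕ) < n - 2) : D h ⟨n - 1, by omega⟩ = 0 := by
  have hsum := hD.2.2.1 h hh
  rw [sum_eq_single_of_mem ⟨n - 1, by omega⟩ (by simp only [mem_filter, mem_univ, true_and]; omega)
    fun ℓ hℓ hne => ?_] at hsum
  · rwa [max_eq_right (Fin.le_iff_val_le_val.2 (by dsimp only; omega)),
      min_eq_left (Fin.le_iff_val_le_val.2 (by dsimp only; omega))] at hsum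
  · simp only [mem_filter, mem_univ, true_and, ne_eq, Fin.ext_iff] at hℓ hne
    exact h0 _ _ (by rw [Fin.coe_min]; omega) (by rw [Fin.coe_max]; omega)

theorem apply_sub_one_sub_two (hD : D ∈ CG4 n hn) (h0 : IsZeroOnInfoEdges D) :
    D ⟨n - 1, by omega⟩ ⟨n - 2, by omega⟩ = 0 := by
  have hsum := hD.2.1 (n - 3) (by omega)
  rwa [sum_eq_zero fun p hp => ?_, zero_add] at hsum
  simp only [mem_filter, mem_univ, true_and, ← Nat.sub_one_add_sub_two_mod (n := n) (by omega)]
    at hp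
  obtain ⟨hle, h1, h2, hmod⟩ := hp
  have hp1 : (p.1 : ℕ) < n - 2 := by
    by_contra!
    rw [show (p.1 : ℕ) = n - 1 by omega] at hmod
    exact h2 ((Nat.ModEq.add_left_cancel' _ hmod).eq_of_lt_of_lt p.2.2 (by omega))
  exact h0 _ _ hp1 (by omega)

theorem apply_sub_one_left (hD : D ∈ CG4 n hn) (h0 : IsZeroOnInfoEdges D) (ℓ : Fin n) :
    D ⟨n - 1, by omega⟩ ℓ = 0 := by
  rcases eq_or_ne (ℓ : ℕ) (n - 2) with hℓ | hℓ
  · rw [show ℓ = ⟨n - 2, by omega⟩ from Fin.ext hℓ]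
    exact apply_sub_one_sub_two hD h0
  have hsum := hD.2.1 ((n - 1 + ℓ) % n) (Nat.mod_lt _ (by omega))
  have hmem : (⟨n - 1, by omega⟩, ℓ) ∈ univ.filter (fun p : Fin n × Fin n =>
      (p.2 : ℕ) ≤ (p.1 : ℕ) ∧ (p.1 : ℕ) ≠ n - 2 ∧ (p.2 : ℕ) ≠ n - 2 ∧
        ((p.1 : ℕ) + (p.2 : ℕ)) % n = (n - 1 + ℓ) % n) := by
    simp only [mem_filter, mem_univ, true_and, and_true]
    omega
  rwa [sum_eq_single_of_mem _ hmem fun p hp hne => ?_, apply_sub_one_sub_two hD h0,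
    add_zero] at hsum
  simp only [mem_filter, mem_univ, true_and] at hp
  obtain ⟨hle, h1, h2, hmod⟩ := hp
  have hp1 : (p.1 : ℕ) < n - 2 := by
    by_contra!
    rw [show (p.1 : ℕ) = n - 1 by omega] at hmod
    have hp2 := (Nat.ModEq.add_left_cancel' _ hmod).eq_of_lt_of_lt p.2.2 ℓ.2
    exact hne (Prod.ext (Fin.ext (by dsimp only; omega)) (Fin.ext hp2))
  exact h0 _ _ hp1 (by omega)

theorem apply_sub_two_sub_one (hD : D ∈ CG4 n hn) (h0 : IsZeroOnInfoEdges D) :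
    D ⟨n - 2, by omega⟩ ⟨n - 1, by omega⟩ = 0 := by
  have hsum := hD.2.2.2 (n - 3) (by omega)
  rwa [sum_eq_zero fun p hp => ?_, zero_add] at hsum
  simp only [mem_filter, mem_univ, true_and, ← Nat.sub_one_add_sub_two_mod (n := n) (by omega)]
    at hp
  obtain ⟨hle, h1, h2, hmod⟩ := hp
  have hp2 : (p.2 : ℕ) < n - 2 := by
    by_contra!
    rw [show (p.2 : ℕ) = n - 2 by omega] at hmod
    have := (Nat.ModEq.add_right_cancel' _ hmod).eq_of_lt_of_lt p.1.2 (by omega)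
    omega
  exact h0 _ _ (by omega) hp2

theorem apply_sub_two_right (hD : D ∈ CG4 n hn) (h0 : IsZeroOnInfoEdges D) (ℓ : Fin n)
    (hℓ : (ℓ : ℕ) ≤ n - 2) : D ℓ ⟨n - 2, by omega⟩ = 0 := by
  have hsum := hD.2.2.2 ((ℓ + (n - 2)) % n) (Nat.mod_lt _ (by omega))
  have hmem : (ℓ, ⟨n - 2, by omega⟩) ∈ univ.filter (fun p : Fin n × Fin n =>
      (p.1 : ℕ) ≤ (p.2 : ℕ) ∧ (p.1 : ℕ) < n - 1 ∧ (p.2 : ℕ) < n - 1 ∧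
        ((p.1 : ℕ) + (p.2 : ℕ)) % n = (ℓ + (n - 2)) % n) := by
    simp only [mem_filter, mem_univ, true_and, and_true]
    omega
  rwa [sum_eq_single_of_mem _ hmem fun p hp hne => ?_, apply_sub_two_sub_one hD h0,
    add_zero] at hsum
  simp only [mem_filter, mem_univ, true_and] at hp
  obtain ⟨hle, h1, h2, hmod⟩ := hp
  have hp2 : (p.2 : ℕ) < n - 2 := by
    by_contra!
    rw [show (p.2 : ℕ) = n - 2 by omega] at hmod
    have hp1 := (Nat.ModEq.add_right_cancel' _ hmod).eq_of_lt_of_lt p.1.2 ℓ.2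
    exact hne (Prod.ext (Fin.ext hp1) (Fin.ext (by dsimp only; omega)))
  exact h0 _ _ (by omega) hp2

theorem eq_zero_of_isZeroOnInfoEdges (hD : D ∈ CG4 n hn) (h0 : IsZeroOnInfoEdges D) : D = 0 := by
  funext k ℓ
  show D k ℓ = 0
  obtain hk | hk | hk : (k : ℕ) < n - 2 ∨ (k : ℕ) = n - 2 ∨ (k : ℕ) = n - 1 := by omega
  · obtain hℓ | hℓ | hℓ : (ℓ : ℕ) < n - 2 ∨ (ℓ : ℕ) = n - 2 ∨ (ℓ : ℕ) = n - 1 := by omega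
    · exact h0 k ℓ hk hℓ
    · rw [show ℓ = ⟨n - 2, by omega⟩ from Fin.ext hℓ]
      exact apply_sub_two_right hD h0 k hk.le
    · rw [show ℓ = ⟨n - 1, by omega⟩ from Fin.ext hℓ]
      exact apply_sub_one_right hD h0 k hk
  · rw [show k = ⟨n - 2, by omega⟩ from Fin.ext hk]
    obtain hℓ | hℓ | hℓ : (ℓ : ℕ) < n - 2 ∨ (ℓ : ℕ) = n - 2 ∨ (ℓ : ℕ) = n - 1 := by omega
    · exact apply_sub_two_left hD h0 ℓ hℓ
    · rw [show ℓ = ⟨n - 2, by omega⟩ from Fin.ext hℓ]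
      exact apply_sub_two_right hD h0 _ le_rfl
    · rw [show ℓ = ⟨n - 1, by omega⟩ from Fin.ext hℓ]
      exact apply_sub_two_sub_one hD h0
  · rw [show k = ⟨n - 1, by omega⟩ from Fin.ext hk]
    exact apply_sub_one_left hD h0 ℓ

end CG4

/-- Systematic property of `C_{G_4}`: for prime `n ≥ 5`, restricting a labeling of
`C_{G_4}` to the information edges `{(k,ℓ) : k,ℓ ∈ [n-2]}` is a bijection from `C_{G_4}`
onto `F_2^{(n-2)²}`: every assignment of values to the edges among the first `n-2`
nodes extends to exactly one labeling in `C_{G_4}`. -/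
theorem CG4_systematic (n : ℕ) (hn : 5 ≤ n) :
    Set.BijOn
      (fun (L : Fin n → Fin n → ZMod 2) (k ℓ : Fin (n - 2)) =>
        L (Fin.castLE (by omega) k) (Fin.castLE (by omega) ℓ))
      (CG4 n hn) Set.univ := by
  have hker : ∀ L, (∀ i, CG4.checks n hn i L = 0) →
      edgeRestrict (ZMod 2) (Fin.castLE (Nat.sub_le n 2)) L = 0 → L = 0 :=
    fun L hL hL0 => CG4.eq_zero_of_isZeroOnInfoEdges ((CG4.eq_setOf_checks n hn).ge hL)
      fun k ℓ hk hℓ => congrFun (congrFun hL0 ⟨k, hk⟩) ⟨ℓ, hℓ⟩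
  rw [CG4.eq_setOf_checks]
  exact LinearMap.bijOn_zeroLocus_of_finrank_le _ _ hker
    (CG4.finrank_info_add_card_checkIndex (by omega)).le
end
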